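/- If ρ is a left eigenvector of a complex n×n matrix B with eigenvalue λ, and λ is a simple eigenvalue (algebraic multiplicity 1) with right eigenvector u, then ρ(u) ≠ 0. -/

import Mathlib

/-!
Put `g = B - λ`. By the Fitting decomposition, the space is the sum of the generalized
eigenspace `⋃ ker gᵏ` and of `range g`. Simplicity of `λ` makes the generalized eigenspace the
line through `u`, and `ρ ∘ g = 0` makes `ρ` vanish on `range g`; so `ρ u = 0` would force `ρ = 0`.
-/

open Matrix

namespace Module.End

open Module

theorem codisjoint_maxGenEigenspace_range_sub_smul {R M : Type*} [CommRing R] [AddCommGroup M]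
    [Module R M] [IsNoetherian R M] [IsArtinian R M] (f : End R M) (μ : R) :
    Codisjoint (f.maxGenEigenspace μ) (LinearMap.range (f - μ • 1)) := by
  have hfitting := LinearMap.isCompl_iSup_ker_pow_iInf_range_pow (f - μ • 1)
  simp_rw [← genEigenspace_nat, iSup_genEigenspace_eq] at hfitting
  exact hfitting.codisjoint.mono_right (iInf_le_of_le 1 (by rw [pow_one]))

variable {K V : Type*} [Field K] [AddCommGroup V] [Module K V] [FiniteDimensional K V]
  {f : End K V} {μ : K}

theorem maxGenEigenspace_eq_span_of_rootMultiplicity_eq_one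
    (hμ : f.charpoly.rootMultiplicity μ = 1) {u : V} (hu : u ∈ f.eigenspace μ) (hu0 : u ≠ 0) :
    f.maxGenEigenspace μ = K ∙ u := by
  refine (Submodule.eq_of_le_of_finrank_le ?_ ?_).symm
  · exact (Submodule.span_singleton_le_iff_mem _ _).2 (eigenspace_le_maxGenEigenspace hu)
  · rw [LinearMap.finrank_maxGenEigenspace_eq, hμ, finrank_span_singleton hu0]

theorem dual_apply_ne_zero_of_rootMultiplicity_eq_one
    (hμ : f.charpoly.rootMultiplicity μ = 1) {u : V} (hu : u ∈ f.eigenspace μ) (hu0 : u ≠ 0)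
    {φ : Dual K V} (hφ : φ ∘ₗ f = μ • φ) (hφ0 : φ ≠ 0) : φ u ≠ 0 := by
  intro hφu
  have hgen : f.maxGenEigenspace μ ≤ LinearMap.ker φ := by
    rw [maxGenEigenspace_eq_span_of_rootMultiplicity_eq_one hμ hu hu0,
      Submodule.span_singleton_le_iff_mem]
    exact hφu
  have hrange : LinearMap.range (f - μ • 1) ≤ LinearMap.ker φ := by
    rintro _ ⟨v, rfl⟩
    simpa [sub_eq_zero] using LinearMap.congr_fun hφ v
  exact hφ0 (LinearMap.ker_eq_top.1 (codisjoint_self.1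
    ((f.codisjoint_maxGenEigenspace_range_sub_smul μ).mono hgen hrange)))

end Module.End

/-- If λ is a simple eigenvalue (algebraic multiplicity 1) of B with
right eigenvector u and left eigenvector ρ, then ρ(u) ≠ 0. -/
theorem stmt_7 {n : ℕ} (B : Matrix (Fin n) (Fin n) ℂ) (lam : ℂ)
    (hsimple : (Matrix.charpoly B).rootMultiplicity lam = 1)
    (u : Fin n → ℂ) (hu : u ≠ 0) (hBu : B.mulVec u = lam • u)
    (ρ : Fin n → ℂ) (hρ : ρ ≠ 0) (hρB : Matrix.vecMul ρ B = lam • ρ) :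
    dotProduct ρ u ≠ 0 := by
  have hleft : dotProductEquiv ℂ (Fin n) ρ ∘ₗ B.toLin' = lam • dotProductEquiv ℂ (Fin n) ρ :=
    LinearMap.ext fun v => by simp [dotProduct_mulVec, hρB]
  exact Module.End.dual_apply_ne_zero_of_rootMultiplicity_eq_one (B.charpoly_toLin' ▸ hsimple)
    (Module.End.mem_eigenspace_iff.2 hBu) hu hleft ((LinearEquiv.map_ne_zero_iff _).2 hρ)
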